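/- The function F(τ) = (τ/(1 − ω_q(τ)))·(p − (q(p−1)/(q−1))·ω_q(τ)) − q·(p·ω_q(τ)^(q−1) − (p−1)·ω_q(τ)^q) is strictly increasing on the interval (0,1). -/

import Mathlib

/-!
Writing `w = ω_q(τ)` and substituting `τ = H_q(w)`, the formula for `F` collapses to
`F(τ) = (p - q)/(q - 1) · w^q/(w - 1)`. As `τ` increases through `(0,1)`, `w` decreases
through `(1, q/(q-1))`, where `w ↦ w^q/(w - 1)` is decreasing (its derivative has the sign
of `(q - 1)w - q`); hence `F` increases.
-/

noncomputable section

open Real Set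

/-- `H r z = r·z^(r-1) - (r-1)·z^r`. -/
def H (r z : ℝ) : ℝ := r * z ^ (r - 1) - (r - 1) * z ^ r

/-- `ω` is the inverse of `H r`, mapping `(0,1]` into `[1, r/(r-1))`,
    so that `H r (ω s) = s` for `s ∈ (0,1]`. -/
def IsOmega (r : ℝ) (ω : ℝ → ℝ) : Prop :=
  ∀ s ∈ Set.Ioc (0 : ℝ) 1, ω s ∈ Set.Ico (1 : ℝ) (r / (r - 1)) ∧ H r (ω s) = s

/-- `τ(s₁,s₂,t) = ((p-q)/p)·(t^p - s₁)/(t^(p-q) - s₁/s₂)`. -/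
def tau (p q s₁ s₂ t : ℝ) : ℝ :=
  ((p - q) / p) * ((t ^ p - s₁) / (t ^ (p - q) - s₁ / s₂))

/-- `F(τ)` from the paper, where `ω` plays the role of `ω_q`. -/
def Ffun (p q : ℝ) (ω : ℝ → ℝ) (τ : ℝ) : ℝ :=
  (τ / (1 - ω τ)) * (p - (q * (p - 1) / (q - 1)) * ω τ)
    - q * (p * ω τ ^ (q - 1) - (p - 1) * ω τ ^ q)

/-- `A(s)` from the paper, where `ω` plays the role of `ω_q`. -/
def Afun (q : ℝ) (ω : ℝ → ℝ) (s : ℝ) : ℝ :=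
  s * (ω s / ((q - 1) * (ω s - 1)) + ω s ^ q / s)

lemma hasDerivAt_H (r : ℝ) {z : ℝ} (hz : 0 < z) :
    HasDerivAt (H r) (r * (r - 1) * (z ^ (r - 2) - z ^ (r - 1))) z := by
  have h₁ := (hasDerivAt_rpow_const (p := r - 1) (Or.inl hz.ne')).const_mul r
  have h₂ := (hasDerivAt_rpow_const (p := r) (Or.inl hz.ne')).const_mul (r - 1)
  rw [show r - 1 - 1 = r - 2 by ring] at h₁
  exact (h₁.sub h₂).congr_deriv (by ring)

lemma H_one (r : ℝ) : H r 1 = 1 := by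
  simp [H]

lemma H_strictAntiOn {r : ℝ} (hr : 1 < r) : StrictAntiOn (H r) (Ici 1) := by
  refine strictAntiOn_of_deriv_neg (convex_Ici 1)
    (fun z hz => (hasDerivAt_H r (by linarith [mem_Ici.mp hz])).continuousAt.continuousWithinAt)
    fun z hz => ?_
  rw [interior_Ici] at hz
  have hz : 1 < z := hz
  rw [(hasDerivAt_H r (by linarith)).deriv]
  have hpow : z ^ (r - 2) < z ^ (r - 1) := rpow_lt_rpow_of_exponent_lt hz (by linarith)
  have hr' : 0 < r * (r - 1) := by nlinarith
  nlinarith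

namespace IsOmega

variable {r : ℝ} {ω : ℝ → ℝ}

lemma one_lt (hω : IsOmega r ω) {s : ℝ} (hs : s ∈ Ioo 0 1) : 1 < ω s := by
  obtain ⟨⟨hge, -⟩, hH⟩ := hω s (Ioo_subset_Ioc_self hs)
  refine lt_of_le_of_ne hge fun h => ?_
  rw [← h, H_one] at hH
  exact hs.2.ne' hH

lemma strictAntiOn (hω : IsOmega r ω) (hr : 1 < r) : StrictAntiOn ω (Ioc 0 1) := by
  intro s hs t ht hst
  obtain ⟨⟨hs₁, -⟩, hHs⟩ := hω s hs
  obtain ⟨⟨ht₁, -⟩, hHt⟩ := hω t ht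
  rwa [← (H_strictAntiOn hr).lt_iff_gt hs₁ ht₁, hHs, hHt]

end IsOmega

lemma strictAntiOn_rpow_div_sub_one {q : ℝ} (hq : 1 < q) :
    StrictAntiOn (fun w : ℝ => w ^ q / (w - 1)) (Ioc 1 (q / (q - 1))) := by
  have hderiv : ∀ w ∈ Ioo 1 (q / (q - 1)),
      HasDerivAt (fun w : ℝ => w ^ q / (w - 1))
        ((q * w ^ (q - 1) * (w - 1) - w ^ q * 1) / (w - 1) ^ 2) w := fun w hw =>
    (hasDerivAt_rpow_const (Or.inl (by linarith [hw.1]))).div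
      ((hasDerivAt_id w).sub_const 1) (sub_ne_zero.mpr hw.1.ne')
  refine strictAntiOn_of_deriv_neg (convex_Ioc _ _) (fun w hw => ?_) fun w hw => ?_
  · have hw0 : w ≠ 0 := by linarith [hw.1]
    exact ((continuousAt_id.rpow_const (Or.inl hw0)).div (continuousAt_id.sub continuousAt_const)
      (sub_ne_zero.mpr hw.1.ne')).continuousWithinAt
  rw [interior_Ioc] at hw
  rw [(hderiv w hw).deriv]
  have hw0 : 0 < w := by linarith [hw.1]
  have hwq : w ^ q = w ^ (q - 1) * w := by
    rw [← rpow_add_one hw0.ne']; ring_nf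
  have hcrit : w * (q - 1) < q := (lt_div_iff₀ (by linarith)).mp hw.2
  have ha : 0 < w ^ (q - 1) := rpow_pos_of_pos hw0 _
  refine div_neg_of_neg_of_pos ?_ (by nlinarith [hw.1])
  rw [hwq]
  nlinarith

lemma Ffun_eq_of_H_eq {p q τ : ℝ} {ω : ℝ → ℝ} (hq : q ≠ 1) (hw₀ : 0 < ω τ) (hw₁ : ω τ ≠ 1)
    (hH : H q (ω τ) = τ) :
    Ffun p q ω τ = (p - q) / (q - 1) * (ω τ ^ q / (ω τ - 1)) := by
  rw [Ffun]
  generalize ω τ = w at hw₀ hw₁ hH ⊢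
  subst hH
  have hwq : w ^ q = w ^ (q - 1) * w := by
    rw [← rpow_add_one hw₀.ne']; ring_nf
  rw [H, hwq]
  have : 1 - w ≠ 0 := sub_ne_zero.mpr hw₁.symm
  have : w - 1 ≠ 0 := sub_ne_zero.mpr hw₁
  have : q - 1 ≠ 0 := sub_ne_zero.mpr hq
  field_simp
  ring

/-- `F` is strictly increasing on `(0,1)`. -/
theorem stmt_5 (p q : ℝ) (hq : 1 < q) (hqp : q < p)
    (ωq : ℝ → ℝ) (hωq : IsOmega q ωq) :
    StrictMonoOn (Ffun p q ωq) (Set.Ioo (0 : ℝ) 1) := by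
  have hmaps : MapsTo ωq (Ioo 0 1) (Ioc 1 (q / (q - 1))) := fun τ hτ =>
    ⟨hωq.one_lt hτ, (hωq τ (Ioo_subset_Ioc_self hτ)).1.2.le⟩
  have hmono : StrictMonoOn (fun τ => ωq τ ^ q / (ωq τ - 1)) (Ioo 0 1) :=
    (strictAntiOn_rpow_div_sub_one hq).comp
      ((hωq.strictAntiOn hq).mono Ioo_subset_Ioc_self) hmaps
  have hF : ∀ τ ∈ Ioo (0 : ℝ) 1,
      Ffun p q ωq τ = (p - q) / (q - 1) * (ωq τ ^ q / (ωq τ - 1)) := fun τ hτ =>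
    have hw := hωq.one_lt hτ
    Ffun_eq_of_H_eq hq.ne' (zero_lt_one.trans hw) hw.ne' (hωq τ (Ioo_subset_Ioc_self hτ)).2
  have hc : 0 < (p - q) / (q - 1) := div_pos (by linarith) (by linarith)
  intro s hs t ht hst
  rw [hF s hs, hF t ht]
  exact mul_lt_mul_of_pos_left (hmono hs ht hst) hc
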